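/- Let |ν⟩ be normalized, n̂ ≠ 0 with first 1 at position k, and suppose O acts on |ν⟩ as α X_{n̂}Z_{m̂} with real expectation value E = ⟨ν|αX_{n̂}Z_{m̂}|ν⟩. Then the squared norm of P_k · (1/√2)(I ± αX_{n̂}Z_{m̂}) |ν⟩ equals (1 ± E)/2. -/

import Mathlib

open Matrix BigOperators Finset

/-- Bitwise XOR of bit strings. -/
def bxor {n : ℕ} (a b : Fin n → Bool) : Fin n → Bool := fun k => xor (a k) (b k)

/-- Number of positions where both bit strings are 1. -/
def bip {n : ℕ} (a b : Fin n → Bool) : ℕ :=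
  (Finset.univ.filter (fun k => a k = true ∧ b k = true)).card

/-- Inner product `⟨ψ|φ⟩`. -/
noncomputable def qInner {n : ℕ} (ψ φ : (Fin n → Bool) → ℂ) : ℂ :=
  ∑ v, star (ψ v) * φ v

/-- The Pauli string `X_a Z_b` (Z acting on the flipped index):
`(X_a Z_b ν)(î) = (-1)^{î·b} ν(î⊕a)`. -/
noncomputable def XZ (n : ℕ) (a b : Fin n → Bool) :
    Matrix (Fin n → Bool) (Fin n → Bool) ℂ :=
  Matrix.of fun v w => if v = bxor w a then ((-1 : ℂ) ^ bip v b) else 0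

/-- Projector `|0⟩⟨0|` on qubit `k`. -/
noncomputable def projK (n : ℕ) (k : Fin n) :
    Matrix (Fin n → Bool) (Fin n → Bool) ℂ :=
  Matrix.of fun v w => if v = w ∧ v k = false then 1 else 0

namespace MOPaux

noncomputable def sgn {n : ℕ} (v b : Fin n → Bool) : ℂ :=
  ∏ j, (if v j = true ∧ b j = true then (-1 : ℂ) else 1)

lemma sgn_eq {n : ℕ} (v b : Fin n → Bool) : ((-1 : ℂ) ^ bip v b) = sgn v b := by
  rw [bip, sgn, ← Finset.prod_const, Finset.prod_filter]

lemma sgn_sq {n : ℕ} (v b : Fin n → Bool) : sgn v b * sgn v b = 1 := by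
  rw [sgn, ← Finset.prod_mul_distrib]
  apply Finset.prod_eq_one
  intro j _
  split_ifs <;> norm_num

lemma bxor_bxor {n : ℕ} (v a : Fin n → Bool) : bxor (bxor v a) a = v := by
  funext j
  simp [bxor, Bool.xor_assoc]

lemma eq_bxor_iff {n : ℕ} (v w a : Fin n → Bool) : v = bxor w a ↔ w = bxor v a := by
  constructor <;> (rintro rfl; rw [bxor_bxor])

lemma sgn_bxor {n : ℕ} (v a b : Fin n → Bool) :
    sgn (bxor v a) b = sgn v b * sgn a b := by
  rw [sgn, sgn, sgn, ← Finset.prod_mul_distrib]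
  apply Finset.prod_congr rfl
  intro j _
  cases hv : v j <;> cases ha : a j <;> cases hb : b j <;> simp [bxor, hv, ha, hb]

lemma XZ_apply' {n : ℕ} (a b v w : Fin n → Bool) :
    XZ n a b v w = if w = bxor v a then sgn v b else 0 := by
  rw [XZ, Matrix.of_apply, sgn_eq]
  simp only [eq_bxor_iff v w a]


lemma XZ_mul {n : ℕ} (a b : Fin n → Bool) (B : Matrix (Fin n → Bool) (Fin n → Bool) ℂ) :
    XZ n a b * B = Matrix.of fun v w => sgn v b * B (bxor v a) w := by
  ext v w
  rw [Matrix.mul_apply]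
  simp only [XZ_apply', Matrix.of_apply, ite_mul, zero_mul, Finset.sum_ite_eq',
    Finset.mem_univ, if_true]

lemma mul_XZ {n : ℕ} (a b : Fin n → Bool) (B : Matrix (Fin n → Bool) (Fin n → Bool) ℂ) :
    B * XZ n a b = Matrix.of fun v w => B v (bxor w a) * sgn (bxor w a) b := by
  ext v w
  rw [Matrix.mul_apply]
  have : ∀ u : Fin n → Bool, (w = bxor u a) = (u = bxor w a) := fun u =>
    propext (eq_bxor_iff w u a)
  simp only [XZ_apply', Matrix.of_apply, this, mul_ite, mul_zero,
    Finset.sum_ite_eq', Finset.mem_univ, if_true]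

lemma projK_mul {n : ℕ} (k : Fin n) (B : Matrix (Fin n → Bool) (Fin n → Bool) ℂ) :
    projK n k * B = Matrix.of fun v w => if v k = false then B v w else 0 := by
  ext v w
  rw [Matrix.mul_apply]
  simp only [projK, Matrix.of_apply, ite_and, ite_mul, zero_mul, one_mul,
    Finset.sum_ite_eq, Finset.mem_univ, if_true]

lemma mul_projK {n : ℕ} (k : Fin n) (B : Matrix (Fin n → Bool) (Fin n → Bool) ℂ) :
    B * projK n k = Matrix.of fun v w => if w k = false then B v w else 0 := by
  ext v w
  rw [Matrix.mul_apply]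
  have : ∀ u : Fin n → Bool, ((u = w ∧ u k = false) : Prop) = (u = w ∧ w k = false) := by
    intro u
    by_cases h : u = w <;> simp [h]
  simp only [projK, Matrix.of_apply, this, ite_and, mul_ite, mul_zero, mul_one,
    Finset.sum_ite_eq', Finset.mem_univ, if_true]


lemma anticomm {n : ℕ} (nh mh : Fin n → Bool) (k : Fin n) (hk1 : nh k = true) :
    projK n k * XZ n nh mh + XZ n nh mh * projK n k = XZ n nh mh := by
  ext v w
  rw [Matrix.add_apply, projK_mul, mul_projK]
  simp only [Matrix.of_apply]
  by_cases hvw : v = bxor w nh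
  · have hvk : v k = !(w k) := by
      subst hvw; simp [bxor, hk1]
    cases hwk : w k <;> simp [hvk, hwk]
  · have h0 : XZ n nh mh v w = 0 := by
      rw [XZ, Matrix.of_apply, if_neg hvw]
    simp [h0]

lemma XZ_P_XZ {n : ℕ} (nh mh : Fin n → Bool) (k : Fin n) (hk1 : nh k = true) :
    XZ n nh mh * projK n k * XZ n nh mh = sgn nh mh • (1 - projK n k) := by
  rw [Matrix.mul_assoc, projK_mul, XZ_mul]
  ext v w
  simp only [Matrix.of_apply, Matrix.smul_apply, Matrix.sub_apply, Matrix.one_apply, projK,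
    Matrix.of_apply, XZ_apply']
  have hbk : (bxor v nh) k = !(v k) := by simp [bxor, hk1]
  have hiff : (w = bxor (bxor v nh) nh) ↔ (w = v) := by rw [bxor_bxor]
  by_cases hvw : v = w
  · subst hvw
    cases hvk : v k <;>
      simp [hbk, hvk, hiff, sgn_bxor, smul_eq_mul]
    · ring_nf
      rw [sq, sgn_sq, one_mul]
  · have : ¬ (w = bxor (bxor v nh) nh) := by rw [hiff]; exact fun h => hvw h.symm
    simp [this, hvw, Ne.symm hvw]

lemma qInner_self_mulVec {n : ℕ} (A : Matrix (Fin n → Bool) (Fin n → Bool) ℂ)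
    (ν : (Fin n → Bool) → ℂ) :
    qInner (A.mulVec ν) (A.mulVec ν) = qInner ν ((Aᴴ * A).mulVec ν) := by
  show star (A.mulVec ν) ⬝ᵥ A.mulVec ν = star ν ⬝ᵥ (Aᴴ * A).mulVec ν
  rw [Matrix.star_mulVec, ← Matrix.mulVec_mulVec]
  simp only [Matrix.dotProduct_mulVec, Matrix.vecMul_vecMul]

lemma qInner_add_right {n : ℕ} (ψ φ χ : (Fin n → Bool) → ℂ) :
    qInner ψ (φ + χ) = qInner ψ φ + qInner ψ χ := by
  simp [qInner, mul_add, Finset.sum_add_distrib]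

lemma qInner_smul_right {n : ℕ} (c : ℂ) (ψ φ : (Fin n → Bool) → ℂ) :
    qInner ψ (c • φ) = c * qInner ψ φ := by
  simp [qInner, Finset.mul_sum]
  exact Finset.sum_congr rfl fun v _ => by ring


lemma sgn_star {n : ℕ} (v b : Fin n → Bool) : star (sgn v b) = sgn v b := by
  rw [← sgn_eq]; simp

lemma projK_herm {n : ℕ} (k : Fin n) : (projK n k)ᴴ = projK n k := by
  ext v w
  simp only [Matrix.conjTranspose_apply, projK, Matrix.of_apply]
  by_cases h : v = w
  · subst h; simp
  · simp [h, Ne.symm h]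

lemma herm_alpha {n : ℕ} (nh mh : Fin n → Bool) (α : ℂ)
    (hherm : (α • XZ n nh mh)ᴴ = α • XZ n nh mh) :
    star α * sgn nh mh = α := by
  set v0 : Fin n → Bool := fun _ => false with hv0
  have h : (α • XZ n nh mh)ᴴ v0 nh = (α • XZ n nh mh) v0 nh := by rw [hherm]
  have hb1 : bxor v0 nh = nh := by funext j; simp [bxor, hv0]
  have hb2 : bxor nh nh = v0 := by funext j; simp [bxor, hv0]
  have hx1 : XZ n nh mh nh v0 = sgn nh mh := by
    rw [XZ, Matrix.of_apply, if_pos hb1.symm, sgn_eq]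
  have hx2 : XZ n nh mh v0 nh = 1 := by
    rw [XZ, Matrix.of_apply, if_pos hb2.symm]
    have : bip v0 mh = 0 := by simp [bip, hv0]
    rw [this, pow_zero]
  rw [Matrix.conjTranspose_apply, Matrix.smul_apply, Matrix.smul_apply, hx1, hx2,
    smul_eq_mul, smul_eq_mul, mul_one, star_mul', sgn_star] at h
  exact h


lemma key_matrix {n : ℕ} (nh mh : Fin n → Bool) (k : Fin n) (hk1 : nh k = true)
    (α : ℂ) (hαε : α * α * sgn nh mh = 1)
    (hherm : (α • XZ n nh mh)ᴴ = α • XZ n nh mh)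
    (s : ℂ) (hs2 : s * s = 1) (hsc : star s = s)
    (c : ℂ) (hcc : star c = c) :
    (projK n k * (c • (1 + s • (α • XZ n nh mh))))ᴴ *
      (projK n k * (c • (1 + s • (α • XZ n nh mh))))
    = (c * c) • (1 + s • (α • XZ n nh mh)) := by
  set X := XZ n nh mh with hXdef
  set P := projK n k with hPdef
  set M : Matrix (Fin n → Bool) (Fin n → Bool) ℂ := α • X with hMdef
  set Q : Matrix (Fin n → Bool) (Fin n → Bool) ℂ := 1 + s • M with hQdef
  have hPP : P * P = P := by
    rw [hPdef, projK_mul]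
    ext v w
    by_cases h : v k = false <;> simp [projK, Matrix.of_apply, h]
  have hanti : P * X + X * P = X := anticomm nh mh k hk1
  have hXPX : X * P * X = sgn nh mh • (1 - P) := XZ_P_XZ nh mh k hk1
  have hPM : P * M + M * P = M := by
    rw [hMdef, mul_smul_comm, smul_mul_assoc, ← smul_add, hanti]
  have hMPM : M * P * M = 1 - P := by
    rw [hMdef, smul_mul_assoc, smul_mul_assoc, mul_smul_comm, smul_smul, hXPX,
      smul_smul, hαε, one_smul]
  have hMH : Mᴴ = M := hherm
  have hPH : Pᴴ = P := projK_herm k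
  have hQH : Qᴴ = Q := by
    rw [hQdef, Matrix.conjTranspose_add, Matrix.conjTranspose_one,
      Matrix.conjTranspose_smul, hMH, hsc]
  have hQPQ : Q * P * Q = Q := by
    have e1 : Q * P = P + s • (M * P) := by
      rw [hQdef, add_mul, one_mul, smul_mul_assoc]
    have e2 : P * Q = P + s • (P * M) := by
      rw [hQdef, mul_add, mul_one, mul_smul_comm]
    have e3 : (M * P) * Q = M * P + s • (M * P * M) := by
      rw [hQdef, mul_add, mul_one, mul_smul_comm]
    rw [e1, add_mul, e2, smul_mul_assoc, e3, smul_add, smul_smul, hs2, one_smul, hMPM]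
    have hsum : s • (P * M) + s • (M * P) = s • M := by rw [← smul_add, hPM]
    rw [hQdef, ← hsum]
    abel
  calc (P * (c • Q))ᴴ * (P * (c • Q))
      = ((c • Q)ᴴ * Pᴴ) * (P * (c • Q)) := by rw [Matrix.conjTranspose_mul]
    _ = ((c • Q) * P) * (P * (c • Q)) := by rw [Matrix.conjTranspose_smul, hcc, hQH, hPH]
    _ = (c * c) • ((Q * P) * (P * Q)) := by
        rw [smul_mul_assoc, smul_mul_assoc, mul_smul_comm, mul_smul_comm, smul_smul]
    _ = (c * c) • ((Q * (P * P)) * Q) := by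
        rw [← Matrix.mul_assoc, Matrix.mul_assoc Q P P]
    _ = (c * c) • Q := by rw [hPP, hQPQ]

end MOPaux

/-- for normalized `|ν⟩`, `n̂ ≠ 0` with first 1 at `k`, and an observable
acting as `α X_{n̂}Z_{m̂}` with real expectation `E`, the squared norm of
`P_k · (1/√2)(I ± α X_{n̂}Z_{m̂}) |ν⟩` equals `(1 ± E)/2`. -/
theorem measurement_outcome_probability
    (n : ℕ) (nh mh : Fin n → Bool)
    (hn0 : nh ≠ fun _ => false)
    (k : Fin n) (hk : nh k = true ∧ ∀ j, j < k → nh j = false)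
    (α : ℂ) (hα : ‖α‖ = 1)
    (hherm : (α • XZ n nh mh)ᴴ = α • XZ n nh mh)
    (ν : (Fin n → Bool) → ℂ) (hν : qInner ν ν = 1)
    (E : ℝ) (hE : (E : ℂ) = qInner ν ((α • XZ n nh mh).mulVec ν))
    (s : ℂ) (hs : s = 1 ∨ s = -1) :
    qInner
        ((projK n k *
            ((((Real.sqrt 2)⁻¹ : ℝ) : ℂ) • (1 + s • (α • XZ n nh mh)))).mulVec ν)
        ((projK n k *
            ((((Real.sqrt 2)⁻¹ : ℝ) : ℂ) • (1 + s • (α • XZ n nh mh)))).mulVec ν)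
      = (1 + s * (E : ℂ)) / 2 := by
  have hs2 : s * s = 1 := by rcases hs with h | h <;> rw [h] <;> norm_num
  have hsc : star s = s := by rcases hs with h | h <;> rw [h] <;> simp
  have hcc : star ((((Real.sqrt 2)⁻¹ : ℝ) : ℂ)) = (((Real.sqrt 2)⁻¹ : ℝ) : ℂ) :=
    Complex.conj_ofReal _
  have hc2 : (((Real.sqrt 2)⁻¹ : ℝ) : ℂ) * (((Real.sqrt 2)⁻¹ : ℝ) : ℂ) = 1 / 2 := by
    rw [← Complex.ofReal_mul, ← mul_inv,
      Real.mul_self_sqrt (by norm_num : (0:ℝ) ≤ 2)]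
    norm_num
  have hε2 := MOPaux.sgn_sq nh mh
  have hconj := MOPaux.herm_alpha nh mh α hherm
  have h1 : α * star α = 1 := by
    rw [Complex.star_def, Complex.mul_conj, Complex.normSq_eq_norm_sq, hα]
    norm_num
  have hαε : α * α * MOPaux.sgn nh mh = 1 := by
    linear_combination (-(α * MOPaux.sgn nh mh)) * hconj + (α * star α) * hε2 + h1
  rw [MOPaux.qInner_self_mulVec,
    MOPaux.key_matrix nh mh k hk.1 α hαε hherm s hs2 hsc _ hcc, hc2,
    Matrix.smul_mulVec, Matrix.add_mulVec, Matrix.one_mulVec,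
    Matrix.smul_mulVec, MOPaux.qInner_smul_right, MOPaux.qInner_add_right,
    MOPaux.qInner_smul_right, hν, ← hE]
  ring
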